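/- For all n ≥ 1 and 0 ≤ k ≤ n, θ(n, n-k) = ∑_{i=0}^{k} i!·C(n,i)·C(n-1,i)·(-2)^{k-i}·c(n-i, n-k), where c denotes the unsigned Stirling numbers of the first kind. -/

import Mathlib

open PowerSeries Finset

/-- Unsigned Lah numbers: `L(n,m) = (n!/m!) * C(n-1,m-1)` for `n ≥ m ≥ 1`, else `0`. -/
noncomputable def lahN (n m : ℕ) : ℚ :=
  if 1 ≤ m ∧ m ≤ n then (n.factorial : ℚ) / (m.factorial : ℚ) * ((n - 1).choose (m - 1) : ℚ)
  else 0

/-- Unsigned Stirling numbers of the first kind (permutations of `n` with `m` cycles). -/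
def stirling1 : ℕ → ℕ → ℕ
  | 0, 0 => 1
  | 0, _ + 1 => 0
  | _ + 1, 0 => 0
  | n + 1, m + 1 => n * stirling1 n (m + 1) + stirling1 n m

/-- Stirling numbers of the second kind. -/
def stirling2 : ℕ → ℕ → ℕ
  | 0, 0 => 1
  | 0, _ + 1 => 0
  | _ + 1, 0 => 0
  | n + 1, m + 1 => (m + 1) * stirling2 n (m + 1) + stirling2 n m

/-- `tanh` as a formal power series over `ℚ`: `(e^u - e^{-u}) / (e^u + e^{-u})`. -/
noncomputable def tanhS : PowerSeries ℚ :=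
  (PowerSeries.exp ℚ - PowerSeries.rescale (-1) (PowerSeries.exp ℚ)) *
    (PowerSeries.exp ℚ + PowerSeries.rescale (-1) (PowerSeries.exp ℚ))⁻¹

/-- `arctanh u = (1/2) log((1+u)/(1-u)) = ∑_{j≥0} u^{2j+1}/(2j+1)` as a formal power series. -/
noncomputable def arctanhS : PowerSeries ℚ :=
  PowerSeries.mk fun n => if n % 2 = 1 then (1 : ℚ) / n else 0

/-- Tanh numbers `Θ(n,m)`, defined by `(1/m!) tanh(u)^m = ∑_n Θ(n,m) u^n/n!`. -/
noncomputable def ThetaT (n m : ℕ) : ℚ :=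
  (n.factorial : ℚ) / (m.factorial : ℚ) * PowerSeries.coeff n (tanhS ^ m)

/-- Arctanh numbers `θ(n,m)`, defined by `(1/m!) arctanh(u)^m = ∑_n θ(n,m) u^n/n!`. -/
noncomputable def thetaA (n m : ℕ) : ℚ :=
  (n.factorial : ℚ) / (m.factorial : ℚ) * PowerSeries.coeff n (arctanhS ^ m)

/-!
Differentiating `arctanh ^ (m + 1)` and using `(1 - u²) · arctanh' = 1` gives
`θ(n + 2, m + 1) = θ(n + 1, m) + n (n + 1) θ(n, m + 1)`, so the row polynomials
`Pₙ = ∑ₘ θ(n, m) Xᵐ` satisfy `Pₙ₊₂ = X Pₙ₊₁ + n (n + 1) Pₙ`.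

Reindexed by `b = n - i`, the right-hand side is the coefficient of `X^(n - k)` in
`∑_b L(n, b) F_b`, where `L` are the Lah numbers and `F_b = X (X - 2) ⋯ (X - 2b + 2)`, whose
coefficients are the scaled Stirling numbers `(-2)^(b - m) c(b, m)`. Since
`X F_b = F_{b+1} + 2b F_b`, the same recurrence for `∑_b L(n, b) F_b` reduces to the Lah identities
`L(n + 2, b + 1) = L(n + 1, b) + (n + b + 2) L(n + 1, b + 1)` and
`(n + 1 - b) L(n + 1, b) = n (n + 1) L(n, b)`.
-/

theorem stirling1_eq_stirlingFirst : stirling1 = Nat.stirlingFirst := by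
  funext n k
  induction n generalizing k with
  | zero => cases k <;> rfl
  | succ n ih => cases k <;> simp [stirling1, Nat.stirlingFirst_succ_succ, ih]

theorem lahN_zero_right (n : ℕ) : lahN n 0 = 0 := by
  simp [lahN]

theorem lahN_eq_zero_of_lt {n m : ℕ} (h : n < m) : lahN n m = 0 := by
  simp [lahN, h.not_ge]

theorem lahN_succ_succ (n m : ℕ) :
    lahN (n + 1) (m + 1) = ((n + 1).factorial / (m + 1).factorial : ℚ) * n.choose m := by
  by_cases h : m ≤ n
  · simp [lahN, h]
  · simp [lahN, Nat.choose_eq_zero_of_lt (not_le.mp h), show ¬m + 1 ≤ n + 1 by omega]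

theorem lahN_sub {n i : ℕ} (hn : 1 ≤ n) (hi : i ≤ n) :
    lahN n (n - i) = i.factorial * n.choose i * (n - 1).choose i := by
  rcases hi.lt_or_eq with hi | rfl
  · have hfac := Nat.choose_mul_factorial_mul_factorial hi.le
    rw [lahN, if_pos (by omega), show n - i - 1 = n - 1 - i by omega,
      Nat.choose_symm (by omega : i ≤ n - 1), ← hfac]
    push_cast
    field_simp
  · simp [lahN_zero_right, Nat.choose_eq_zero_of_lt (by omega : i - 1 < i)]

theorem lahN_add_two_succ (n b : ℕ) :
    lahN (n + 2) (b + 1) = lahN (n + 1) b + (n + b + 2) * lahN (n + 1) (b + 1) := by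
  cases b with
  | zero =>
    simp [lahN_succ_succ, lahN_zero_right, Nat.factorial_succ]
    left
    ring
  | succ c =>
    simp only [lahN_succ_succ, Nat.factorial_succ]
    have absorb : ((n : ℚ) + 1) * n.choose c = (n + 1).choose (c + 1) * (c + 1) := by
      exact_mod_cast Nat.add_one_mul_choose_eq n c
    rw [Nat.choose_succ_succ'] at absorb ⊢
    push_cast at absorb ⊢
    field_simp
    linear_combination absorb

theorem sub_mul_lahN_succ (n b : ℕ) :
    ((n : ℚ) + 1 - b) * lahN (n + 1) b = n * (n + 1) * lahN n b := by
  rcases n with _ | p <;> rcases b with _ | c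
  · simp [lahN_zero_right]
  · rcases c with _ | c <;> simp [lahN_succ_succ]
  · simp [lahN_zero_right]
  · have absorb : ((p : ℚ) + 1 - c) * (p + 1).choose c = (p + 1) * p.choose c := by
      rcases le_or_gt c (p + 1) with hc | hc
      · have h : ((p.choose c * (p + 1) : ℕ) : ℚ) = ((p + 1).choose c * (p + 1 - c) : ℕ) :=
          congrArg _ (Nat.choose_mul_succ_eq p c)
        push_cast [Nat.cast_sub hc] at h
        linear_combination -h
      · simp [Nat.choose_eq_zero_of_lt hc, Nat.choose_eq_zero_of_lt (by omega : p < c)]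
    simp only [lahN_succ_succ, Nat.factorial_succ]
    push_cast
    field_simp
    linear_combination absorb

theorem Finset.sum_range_shift {M : Type*} [AddCommMonoid M] (g : ℕ → M) (N : ℕ) (h0 : g 0 = 0)
    (hN : g N = 0) : ∑ b ∈ range N, g (b + 1) = ∑ b ∈ range N, g b := by
  rw [← add_zero (∑ b ∈ range N, g (b + 1)), ← h0, ← sum_range_succ', sum_range_succ, hN, add_zero]

namespace Polynomial

noncomputable def twoDescPochhammer (b : ℕ) : ℚ[X] :=
  ∏ j ∈ range b, (X - C (2 * j : ℚ))

theorem twoDescPochhammer_succ (b : ℕ) :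
    twoDescPochhammer (b + 1) = twoDescPochhammer b * (X - C (2 * b : ℚ)) :=
  prod_range_succ _ b

theorem X_mul_twoDescPochhammer (b : ℕ) :
    X * twoDescPochhammer b = twoDescPochhammer (b + 1) + C (2 * b : ℚ) * twoDescPochhammer b := by
  rw [twoDescPochhammer_succ]
  ring

theorem coeff_twoDescPochhammer (b m : ℕ) :
    (twoDescPochhammer b).coeff m = (-2 : ℚ) ^ (b - m) * Nat.stirlingFirst b m := by
  induction b generalizing m with
  | zero => cases m <;> simp [twoDescPochhammer, coeff_one]
  | succ b ih =>
    rw [twoDescPochhammer_succ]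
    cases m with
    | zero => cases b <;> simp [ih]
    | succ m =>
      rw [coeff_mul_X_sub_C, ih, ih, Nat.stirlingFirst_succ_succ]
      rcases lt_or_ge m b with hmb | hbm
      · obtain ⟨d, rfl⟩ := Nat.exists_eq_add_of_lt hmb
        rw [show m + d + 1 - m = d + 1 by omega, show m + d + 1 - (m + 1) = d by omega,
          show m + d + 1 + 1 - (m + 1) = d + 1 by omega]
        push_cast
        ring
      · rw [Nat.stirlingFirst_eq_zero_of_lt (by omega : b < m + 1), Nat.sub_eq_zero_of_le hbm,
          Nat.sub_eq_zero_of_le (by omega : b + 1 ≤ m + 1)]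
        simp

noncomputable def lahDescRow (n : ℕ) : ℚ[X] :=
  ∑ b ∈ range (n + 1), C (lahN n b) * twoDescPochhammer b

theorem lahDescRow_eq_sum_range {n N : ℕ} (h : n + 1 ≤ N) :
    lahDescRow n = ∑ b ∈ range N, C (lahN n b) * twoDescPochhammer b :=
  sum_subset (range_subset_range.2 h) fun b _ hb => by
    rw [lahN_eq_zero_of_lt (by simpa using hb), C_0, zero_mul]

theorem lahDescRow_add_two (n : ℕ) :
    lahDescRow (n + 2) = X * lahDescRow (n + 1) + C ((n : ℚ) * (n + 1)) * lahDescRow n := by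
  have expand : lahDescRow (n + 2) =
      ∑ b ∈ range (n + 3), (C (lahN (n + 1) b) * twoDescPochhammer (b + 1) +
        C ((n + b + 1) * lahN (n + 1) b) * twoDescPochhammer b) := by
    rw [lahDescRow, ← sum_range_shift _ (n + 3) (by simp [lahN_zero_right])
      (by simp [lahN_eq_zero_of_lt]), sum_add_distrib,
      ← sum_range_shift (fun b => C ((n + b + 1) * lahN (n + 1) b) * twoDescPochhammer b) (n + 3)
      (by simp [lahN_zero_right]) (by simp [lahN_eq_zero_of_lt]), ← sum_add_distrib]
    refine sum_congr rfl fun b _ => ?_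
    rw [lahN_add_two_succ, C_add, add_mul]
    push_cast
    ring_nf
  rw [expand, lahDescRow_eq_sum_range (N := n + 3) (by omega),
    lahDescRow_eq_sum_range (n := n) (N := n + 3) (by omega), mul_sum, mul_sum, ← sum_add_distrib]
  refine sum_congr rfl fun b _ => ?_
  rw [mul_left_comm X, X_mul_twoDescPochhammer, ← mul_assoc, ← C_mul, ← sub_mul_lahN_succ]
  simp only [map_add, map_mul, map_sub, map_one, map_natCast, map_ofNat]
  ring

theorem coeff_lahDescRow (n m : ℕ) :
    (lahDescRow n).coeff m =
      ∑ b ∈ range (n + 1), lahN n b * ((-2 : ℚ) ^ (b - m) * Nat.stirlingFirst b m) := by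
  simp only [lahDescRow, finsetSum_coeff, coeff_C_mul, coeff_twoDescPochhammer]

theorem coeff_zero_lahDescRow (n : ℕ) : (lahDescRow n).coeff 0 = 0 := by
  rw [coeff_lahDescRow]
  refine sum_eq_zero fun b _ => ?_
  cases b <;> simp [lahN_zero_right]

theorem lahDescRow_one : lahDescRow 1 = X := by
  simp [lahDescRow, sum_range_succ, lahN_zero_right, lahN_succ_succ, twoDescPochhammer]

end Polynomial

theorem constantCoeff_arctanhS : constantCoeff arctanhS = 0 := by
  simp [arctanhS, ← coeff_zero_eq_constantCoeff_apply]

theorem coeff_arctanhS_pow_of_lt {a b : ℕ} (h : a < b) : coeff a (arctanhS ^ b) = 0 :=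
  X_pow_dvd_iff.mp (pow_dvd_pow_of_dvd (X_dvd_iff.mpr constantCoeff_arctanhS) b) a h

theorem coeff_derivative_arctanhS (n : ℕ) :
    coeff n (d⁄dX ℚ arctanhS) = if n % 2 = 0 then 1 else 0 := by
  rw [coeff_derivative]
  simp only [arctanhS, coeff_mk]
  rcases Nat.mod_two_eq_zero_or_one n with h | h
  · rw [if_pos (by omega), if_pos h]
    push_cast
    field_simp
  · rw [if_neg (by omega), if_neg (by omega), zero_mul]

theorem one_sub_X_sq_mul_derivative_arctanhS : (1 - X ^ 2 : ℚ⟦X⟧) * d⁄dX ℚ arctanhS = 1 := by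
  ext n
  rw [sub_mul, one_mul, map_sub, coeff_X_pow_mul', coeff_one]
  rcases n with _ | _ | n
  · simp [coeff_derivative_arctanhS]
  · simp [coeff_derivative_arctanhS]
  · rw [if_pos (by omega), show n + 1 + 1 - 2 = n by omega, coeff_derivative_arctanhS,
      coeff_derivative_arctanhS, show (n + 1 + 1) % 2 = n % 2 by omega, sub_self, if_neg (by omega)]

theorem one_sub_X_sq_mul_derivative_arctanhS_pow (m : ℕ) :
    (1 - X ^ 2 : ℚ⟦X⟧) * d⁄dX ℚ (arctanhS ^ (m + 1)) = (m + 1) • arctanhS ^ m := by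
  rw [Derivation.leibniz_pow, Nat.add_sub_cancel, smul_eq_mul, mul_smul_comm, mul_left_comm,
    one_sub_X_sq_mul_derivative_arctanhS, mul_one]

theorem coeff_arctanhS_pow_succ_add_two (m j : ℕ) :
    ((j : ℚ) + 2) * coeff (j + 2) (arctanhS ^ (m + 1)) =
      ((m : ℚ) + 1) * coeff (j + 1) (arctanhS ^ m) + j * coeff j (arctanhS ^ (m + 1)) := by
  have h := congrArg (coeff (j + 1)) (one_sub_X_sq_mul_derivative_arctanhS_pow m)
  rw [sub_mul, one_mul, map_sub, coeff_X_pow_mul', coeff_derivative, map_nsmul, nsmul_eq_mul] at h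
  rcases j with _ | j
  · simp at h ⊢
    linear_combination h
  · rw [if_pos (by omega), show j + 1 + 1 - 2 = j by omega, coeff_derivative] at h
    push_cast at h ⊢
    linear_combination h

theorem thetaA_succ_zero (n : ℕ) : thetaA (n + 1) 0 = 0 := by
  simp [thetaA, coeff_one]

theorem thetaA_one (m : ℕ) : thetaA 1 m = if m = 1 then 1 else 0 := by
  rcases m with _ | _ | m
  · simp [thetaA, coeff_one]
  · simp [thetaA, arctanhS]
  · simp [thetaA, coeff_arctanhS_pow_of_lt (by omega : 1 < m + 2)]

theorem thetaA_add_two_succ (n m : ℕ) :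
    thetaA (n + 2) (m + 1) = thetaA (n + 1) m + (n + 1) * n * thetaA n (m + 1) := by
  have h := coeff_arctanhS_pow_succ_add_two m n
  simp only [thetaA, Nat.factorial_succ]
  push_cast
  field_simp
  linear_combination h

theorem coeff_lahDescRow_eq_thetaA {n : ℕ} (hn : 1 ≤ n) (m : ℕ) :
    (Polynomial.lahDescRow n).coeff m = thetaA n m := by
  induction n using Nat.strong_induction_on generalizing m with
  | _ n ih =>
  obtain rfl | ⟨n, rfl⟩ : n = 1 ∨ ∃ p, n = p + 2 := by
    rcases n with _ | _ | p <;> simp_all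
  · rw [Polynomial.lahDescRow_one, Polynomial.coeff_X, thetaA_one]
    simp [eq_comm]
  · rw [Polynomial.lahDescRow_add_two]
    rcases m with _ | m
    · simp [Polynomial.coeff_zero_lahDescRow, thetaA_succ_zero]
    · rw [Polynomial.coeff_add, Polynomial.coeff_X_mul, Polynomial.coeff_C_mul,
        ih (n + 1) (by omega) (by omega), thetaA_add_two_succ]
      rcases n with _ | n
      · -- the factor `0 * 1` hides `lahDescRow 0 = 0`, which differs from `θ(0, ·)`
        simp
      · rw [ih (n + 1) (by omega) (by omega)]
        push_cast
        ring

/-- θ(n, n-k) = ∑_{i=0}^{k} i! C(n,i) C(n-1,i) (-2)^{k-i} c(n-i, n-k) for n ≥ 1, 0 ≤ k ≤ n. -/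
theorem arctanh_numbers_as_stirling_sums (n k : ℕ) (hn : 1 ≤ n) (hk : k ≤ n) :
    thetaA n (n - k) =
      ∑ i ∈ Finset.range (k + 1),
        (i.factorial : ℚ) * (n.choose i : ℚ) * ((n - 1).choose i : ℚ) *
          (-2 : ℚ) ^ (k - i) * (stirling1 (n - i) (n - k) : ℚ) := by
  rw [← coeff_lahDescRow_eq_thetaA hn, Polynomial.coeff_lahDescRow, ← sum_range_reflect,
    ← sum_range_add_sum_Ico _ (by omega : k + 1 ≤ n + 1), stirling1_eq_stirlingFirst]
  rw [sum_eq_zero (s := Ico (k + 1) (n + 1)) fun i hi => ?_, add_zero]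
  · refine sum_congr rfl fun i hi => ?_
    rw [mem_range] at hi
    rw [show n + 1 - 1 - i = n - i by omega, lahN_sub hn (by omega),
      show n - i - (n - k) = k - i by omega]
    ring
  · rw [mem_Ico] at hi
    rw [Nat.stirlingFirst_eq_zero_of_lt (by omega : n + 1 - 1 - i < n - k)]
    simp
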